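/- If φ = φ̄₋ + φ₊ ∈ L^∞ is a rational function and the Toeplitz operator T_φ on H² is hyponormal, then deg(φ₋) ≤ deg(φ₊); in particular, if φ = Σ_{n=−m}^{N} a_n zⁿ is a trigonometric polynomial with T_φ hyponormal, then m ≤ N. -/

import Mathlib

open MeasureTheory Complex Real InnerProductSpace Submodule

set_option maxHeartbeats 1000000
set_option synthInstance.maxHeartbeats 200000

noncomputable section

namespace BlockToeplitz

instance fact2pi : Fact (0 < 2 * π) := ⟨by positivity⟩

/-- The unit circle, as the additive circle `ℝ / 2πℤ`. -/
abbrev 𝕋 : Type := AddCircle (2 * π)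

/-- Normalized Haar (Lebesgue) measure on the circle. -/
abbrev μ𝕋 : Measure 𝕋 := AddCircle.haarAddCircle

section Pointwise

variable {E F : Type*} [NormedAddCommGroup E] [NormedSpace ℂ E]
  [NormedAddCommGroup F] [NormedSpace ℂ F]

theorem memLp_pointwise {Φ : 𝕋 → (E →L[ℂ] F)} (hm : AEStronglyMeasurable Φ μ𝕋)
    {C : ℝ} (hC : ∀ x, ‖Φ x‖ ≤ C) (f : Lp E 2 μ𝕋) :
    MemLp (fun x => Φ x (f x)) 2 μ𝕋 := by
  refine MemLp.of_le_mul (c := C) (Lp.memLp f) ?_ ?_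
  · exact isBoundedBilinearMap_apply.continuous.comp_aestronglyMeasurable
      (hm.prodMk (Lp.aestronglyMeasurable f))
  · refine Filter.Eventually.of_forall fun x => ?_
    exact (ContinuousLinearMap.le_opNorm _ _).trans
      (mul_le_mul_of_nonneg_right (hC x) (norm_nonneg _))

/-- The operator on `L²` of pointwise application of a uniformly bounded family of
operators (e.g. multiplication by an `L^∞` matrix function). -/
def pointwiseCLM (Φ : 𝕋 → (E →L[ℂ] F)) (hm : AEStronglyMeasurable Φ μ𝕋)
    {C : ℝ} (hC : ∀ x, ‖Φ x‖ ≤ C) : Lp E 2 μ𝕋 →L[ℂ] Lp F 2 μ𝕋 :=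
  LinearMap.mkContinuous
    { toFun := fun f => (memLp_pointwise hm hC f).toLp _
      map_add' := fun f g => by
        rw [← MemLp.toLp_add (memLp_pointwise hm hC f) (memLp_pointwise hm hC g)]
        refine MemLp.toLp_congr _ _ ?_
        filter_upwards [Lp.coeFn_add f g] with x hx
        simp only [hx, Pi.add_apply, map_add]
      map_smul' := fun c f => by
        rw [RingHom.id_apply, ← MemLp.toLp_const_smul c (memLp_pointwise hm hC f)]
        refine MemLp.toLp_congr _ _ ?_
        filter_upwards [Lp.coeFn_smul c f] with x hx
        simp only [hx, Pi.smul_apply, ContinuousLinearMap.map_smul] }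
    (max C 0)
    (by
      intro f
      simp only [LinearMap.coe_mk, AddHom.coe_mk]
      rw [Lp.norm_toLp]
      have hb : eLpNorm (fun x => Φ x (f x)) 2 μ𝕋
          ≤ ENNReal.ofReal (max C 0) * eLpNorm (f : 𝕋 → E) 2 μ𝕋 := by
        refine eLpNorm_le_mul_eLpNorm_of_ae_le_mul ?_ 2
        refine Filter.Eventually.of_forall fun x => ?_
        exact (ContinuousLinearMap.le_opNorm _ _).trans
          (mul_le_mul_of_nonneg_right ((hC x).trans (le_max_left _ _)) (norm_nonneg _))
      calc (eLpNorm (fun x => Φ x (f x)) 2 μ𝕋).toReal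
          ≤ (ENNReal.ofReal (max C 0) * eLpNorm (f : 𝕋 → E) 2 μ𝕋).toReal := by
            refine ENNReal.toReal_mono ?_ hb
            exact ENNReal.mul_ne_top ENNReal.ofReal_ne_top (Lp.eLpNorm_ne_top f)
        _ = max C 0 * ‖f‖ := by
            rw [ENNReal.toReal_mul, ENNReal.toReal_ofReal (le_max_right C 0), Lp.norm_def])

@[simp] theorem pointwiseCLM_apply (Φ : 𝕋 → (E →L[ℂ] F)) (hm : AEStronglyMeasurable Φ μ𝕋)
    {C : ℝ} (hC : ∀ x, ‖Φ x‖ ≤ C) (f : Lp E 2 μ𝕋) :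
    pointwiseCLM Φ hm hC f = (memLp_pointwise hm hC f).toLp _ := rfl

end Pointwise

end BlockToeplitz

namespace BlockToeplitz
open scoped ComplexConjugate

variable {ι : Type} [Fintype ι]

/-- `ℂ^ι`. -/
abbrev V (ι : Type) [Fintype ι] : Type := EuclideanSpace ℂ ι

/-- The space `L²(𝕋, ℂ^ι)`. -/
abbrev L2 (ι : Type) [Fintype ι] : Type := Lp (V ι) 2 μ𝕋

/-- The vector-valued trigonometric monomial `z^k ⊗ e_i` as an element of `L²`. -/
def fourierV (ι : Type) [Fintype ι] [DecidableEq ι] (k : ℤ) (i : ι) : L2 ι :=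
  (ContinuousMap.toLp (E := V ι) 2 μ𝕋 ℂ)
    ⟨fun x => fourier k x • EuclideanSpace.single i 1,
      (map_continuous (fourier k)).smul continuous_const⟩

/-- The span of the analytic-negative monomials. -/
def negSpan (ι : Type) [Fintype ι] : Submodule ℂ (L2 ι) :=
  Submodule.span ℂ
    {f | ∃ k : ℤ, k < 0 ∧ ∃ i : ι, f = @fourierV ι _ (Classical.decEq ι) k i}

/-- The vector-valued Hardy space `H²(𝕋, ℂ^ι)`, i.e. the orthogonal complement in
`L²` of the span of the monomials `z^k ⊗ e_i`, `k < 0`. -/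
def hardy (ι : Type) [Fintype ι] : Submodule ℂ (L2 ι) := (negSpan ι)ᗮ

/-- The Hardy space as a Hilbert space. -/
abbrev H2 (ι : Type) [Fintype ι] : Type := ↥(hardy ι)

instance : CompleteSpace (H2 ι) := by
  unfold H2 hardy; infer_instance

instance : HasOrthogonalProjection (hardy ι) := by
  unfold hardy; infer_instance

/-- The orthogonal projection `P` of `L²` onto `H²`. -/
def hardyProj (ι : Type) [Fintype ι] : L2 ι →L[ℂ] H2 ι :=
  orthogonalProjection (hardy ι)

/-- A matrix-valued `L^∞` function on the circle (the matrices being identified with the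
operators on `ℂ^ι` that they induce): a bounded measurable family of operators. -/
structure Symbol (ι : Type) [Fintype ι] : Type where
  toFun : 𝕋 → (V ι →L[ℂ] V ι)
  meas : AEStronglyMeasurable toFun μ𝕋
  bound : ℝ
  le_bound : ∀ x, ‖toFun x‖ ≤ bound

instance : CoeFun (Symbol ι) (fun _ => 𝕋 → (V ι →L[ℂ] V ι)) := ⟨Symbol.toFun⟩

/-- The multiplication operator `f ↦ Φ f` on `L²(𝕋, ℂ^ι)`. -/
def Symbol.mulLp (Φ : Symbol ι) : L2 ι →L[ℂ] L2 ι :=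
  pointwiseCLM Φ.toFun Φ.meas Φ.le_bound

/-- Pointwise product (composition) of two matrix symbols. -/
def Symbol.mul (Φ Ψ : Symbol ι) : Symbol ι where
  toFun := fun x => (Φ x).comp (Ψ x)
  meas := isBoundedBilinearMap_comp.continuous.comp_aestronglyMeasurable
    (Φ.meas.prodMk Ψ.meas)
  bound := max Φ.bound 0 * max Ψ.bound 0
  le_bound := fun x => (ContinuousLinearMap.opNorm_comp_le _ _).trans <|
    mul_le_mul ((Φ.le_bound x).trans (le_max_left _ _))
      ((Ψ.le_bound x).trans (le_max_left _ _)) (norm_nonneg _) (le_max_right _ _)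

/-- The pointwise adjoint symbol `Φ*` (conjugate transpose). -/
def Symbol.star (Φ : Symbol ι) : Symbol ι where
  toFun := fun x => ContinuousLinearMap.adjoint (Φ x)
  meas := (ContinuousLinearMap.adjoint (𝕜 := ℂ) (E := V ι)
      (F := V ι)).continuous.comp_aestronglyMeasurable Φ.meas
  bound := Φ.bound
  le_bound := fun x =>
    le_trans
      (le_of_eq ((ContinuousLinearMap.adjoint (𝕜 := ℂ) (E := V ι) (F := V ι)).norm_map (Φ.toFun x)))
      (Φ.le_bound x)

end BlockToeplitz

namespace BlockToeplitz
open scoped ComplexConjugate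

theorem norm_fourier_apply (k : ℤ) (x : 𝕋) : ‖fourier k x‖ = 1 := by
  rw [fourier_apply]; exact Circle.norm_coe _

section CompNeg

variable {E : Type*} [NormedAddCommGroup E] [NormedSpace ℂ E]

/-- The composition operator `f(z) ↦ f(z̄)` (i.e. `x ↦ -x` on the additive circle)
on `L²`. -/
def compNeg (E : Type*) [NormedAddCommGroup E] [NormedSpace ℂ E] :
    Lp E 2 μ𝕋 →L[ℂ] Lp E 2 μ𝕋 :=
  LinearMap.mkContinuous
    { toFun := fun f =>
        Lp.compMeasurePreserving (E := E) (p := 2) Neg.neg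
          (Measure.measurePreserving_neg μ𝕋) f
      map_add' := fun f g => by
        exact map_add (Lp.compMeasurePreserving Neg.neg (Measure.measurePreserving_neg μ𝕋)) f g
      map_smul' := fun c f => by
        apply Lp.ext
        have h1 := Lp.coeFn_compMeasurePreserving (μ := μ𝕋) (c • f)
          (Measure.measurePreserving_neg μ𝕋)
        have h2 := Lp.coeFn_compMeasurePreserving (μ := μ𝕋) f
          (Measure.measurePreserving_neg μ𝕋)
        have h3 : ((c • f : Lp E 2 μ𝕋) : 𝕋 → E) ∘ Neg.neg
            =ᵐ[μ𝕋] ((c • (f : 𝕋 → E)) ∘ Neg.neg) :=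
          (Measure.measurePreserving_neg μ𝕋).quasiMeasurePreserving.ae_eq_comp
            (Lp.coeFn_smul c f)
        filter_upwards [h1, h3,
          Lp.coeFn_smul c (Lp.compMeasurePreserving (E := E) (p := 2) Neg.neg
            (Measure.measurePreserving_neg μ𝕋) f), h2]
          with x hx1 hx3 hx4 hx2
        rw [RingHom.id_apply, hx1, hx3, hx4]
        show c • (f : 𝕋 → E) (-x)
            = c • (Lp.compMeasurePreserving (E := E) (p := 2) Neg.neg
                (Measure.measurePreserving_neg μ𝕋) f : 𝕋 → E) x
        rw [hx2]
        rfl }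
    1
    (fun f => by
      simpa using (Lp.norm_compMeasurePreserving (E := E) (p := 2) f
        (Measure.measurePreserving_neg μ𝕋)).le)

/-- The unitary operator `J f (z) = z̄ f(z̄)` on `L²`. -/
def Jop (E : Type*) [NormedAddCommGroup E] [NormedSpace ℂ E] :
    Lp E 2 μ𝕋 →L[ℂ] Lp E 2 μ𝕋 :=
  (pointwiseCLM (fun x => (fourier (-1) x : ℂ) • (1 : E →L[ℂ] E))
      (((map_continuous (fourier (-1))).smul continuous_const).aestronglyMeasurable)
      (C := 1)
      (fun x => by
        show ‖(fourier (-1)) x • (1 : E →L[ℂ] E)‖ ≤ 1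
        rw [norm_smul ((fourier (-1)) x) (1 : E →L[ℂ] E), norm_fourier_apply, one_mul,
          ContinuousLinearMap.one_def]
        exact ContinuousLinearMap.norm_id_le)).comp (compNeg E)

end CompNeg

end BlockToeplitz

namespace BlockToeplitz
open scoped ComplexConjugate

variable {ι : Type} [Fintype ι]

/-- The pointwise transposed-conjugated-reflected symbol `Φ̃(z) := Φ(z̄)*`. -/
def Symbol.tilde (Φ : Symbol ι) : Symbol ι where
  toFun := fun x => ContinuousLinearMap.adjoint (Φ.toFun (-x))
  meas := (ContinuousLinearMap.adjoint (𝕜 := ℂ) (E := V ι)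
      (F := V ι)).continuous.comp_aestronglyMeasurable
    (Φ.meas.comp_quasiMeasurePreserving
      (Measure.measurePreserving_neg μ𝕋).quasiMeasurePreserving)
  bound := Φ.bound
  le_bound := fun x =>
    le_trans
      (le_of_eq
        ((ContinuousLinearMap.adjoint (𝕜 := ℂ) (E := V ι) (F := V ι)).norm_map (Φ.toFun (-x))))
      (Φ.le_bound (-x))

/-- A matrix symbol belongs to `H^∞` iff multiplication by it leaves the Hardy space
invariant. -/
def Symbol.MemHinf (Φ : Symbol ι) : Prop :=
  ∀ f : L2 ι, f ∈ hardy ι → Φ.mulLp f ∈ hardy ι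

/-- A matrix `H^∞` symbol is inner if `Θ(z)*Θ(z) = I` a.e. -/
def Symbol.IsInner (Φ : Symbol ι) : Prop :=
  Φ.MemHinf ∧ ∀ᵐ x ∂μ𝕋, (ContinuousLinearMap.adjoint (Φ.toFun x)).comp (Φ.toFun x) = 1

/-- The block Toeplitz operator `T_Φ = P (Φ ·)` on the vector Hardy space. -/
def toeplitz (Φ : Symbol ι) : H2 ι →L[ℂ] H2 ι :=
  (hardyProj ι).comp (Φ.mulLp.comp (hardy ι).subtypeL)

/-- The block Hankel operator `H_Φ = J P^⊥ (Φ ·)`, viewed as an operator from `H²` to `H²`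
(its image indeed lies in `H²`). -/
def hankel (Φ : Symbol ι) : H2 ι →L[ℂ] H2 ι :=
  (hardyProj ι).comp <|
    (Jop (V ι)).comp <|
      (ContinuousLinearMap.id ℂ (L2 ι) - (hardy ι).subtypeL.comp (hardyProj ι)).comp <|
        Φ.mulLp.comp (hardy ι).subtypeL

/-- The image `Θ · H²` of the Hardy space under multiplication by a symbol. -/
def Symbol.rangeH2 (Φ : Symbol ι) : Submodule ℂ (L2 ι) :=
  (hardy ι).map (Φ.mulLp : L2 ι →ₗ[ℂ] L2 ι)

/-- The model space `H(Θ) := H² ⊖ Θ H²`. -/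
def modelSpace (Θ : Symbol ι) : Submodule ℂ (L2 ι) :=
  hardy ι ⊓ (Θ.rangeH2)ᗮ

/-- A scalar-valued `L^∞` function on the circle. -/
structure SymbolS : Type where
  toFun : 𝕋 → ℂ
  meas : AEStronglyMeasurable toFun μ𝕋
  bound : ℝ
  le_bound : ∀ x, ‖toFun x‖ ≤ bound

instance : CoeFun SymbolS (fun _ => 𝕋 → ℂ) := ⟨SymbolS.toFun⟩

/-- Scalar symbols embed into matrix symbols as `φ I_n`. -/
def SymbolS.toMatrix (φ : SymbolS) (ι : Type) [Fintype ι] : Symbol ι where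
  toFun := fun x => φ.toFun x • (1 : V ι →L[ℂ] V ι)
  meas := φ.meas.smul aestronglyMeasurable_const
  bound := φ.bound
  le_bound := fun x => by
    have h0 : (0 : ℝ) ≤ φ.bound := le_trans (norm_nonneg _) (φ.le_bound 0)
    calc ‖φ.toFun x • (1 : V ι →L[ℂ] V ι)‖ ≤ ‖φ.toFun x‖ * ‖(1 : V ι →L[ℂ] V ι)‖ :=
          ContinuousLinearMap.opNorm_smul_le _ _
      _ ≤ φ.bound * 1 := by
          refine mul_le_mul (φ.le_bound x) ?_ (norm_nonneg _) h0
          rw [ContinuousLinearMap.one_def]; exact ContinuousLinearMap.norm_id_le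
      _ = φ.bound := mul_one _

/-- The scalar-valued `L²` space of the circle. -/
abbrev L2S : Type := Lp ℂ 2 μ𝕋

/-- The span of the negative trigonometric monomials. -/
def negSpanS : Submodule ℂ L2S :=
  Submodule.span ℂ {f | ∃ k : ℤ, k < 0 ∧ f = fourierLp 2 k}

/-- The scalar Hardy space `H²(𝕋)`. -/
def hardyS : Submodule ℂ L2S := negSpanSᗮ

/-- The scalar Hardy space as a Hilbert space. -/
abbrev H2S : Type := ↥hardyS

instance : CompleteSpace H2S := by unfold H2S hardyS; infer_instance

instance : HasOrthogonalProjection hardyS := by unfold hardyS; infer_instance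

/-- The Szegő (Riesz) projection `P : L² → H²`. -/
def hardyProjS : L2S →L[ℂ] H2S := orthogonalProjection hardyS

/-- Multiplication by a scalar `L^∞` function, as an operator on `L²(𝕋)`. -/
def SymbolS.mulLp (φ : SymbolS) : L2S →L[ℂ] L2S :=
  pointwiseCLM (fun x => φ.toFun x • (1 : ℂ →L[ℂ] ℂ))
    (φ.meas.smul aestronglyMeasurable_const)
    (C := φ.bound)
    (fun x => by
      calc ‖φ.toFun x • (1 : ℂ →L[ℂ] ℂ)‖ ≤ ‖φ.toFun x‖ * ‖(1 : ℂ →L[ℂ] ℂ)‖ :=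
            ContinuousLinearMap.opNorm_smul_le _ _
        _ = ‖φ.toFun x‖ := by rw [norm_one, mul_one]
        _ ≤ φ.bound := φ.le_bound x)

/-- The scalar Toeplitz operator `T_φ` on `H²`. -/
def toeplitzS (φ : SymbolS) : H2S →L[ℂ] H2S :=
  hardyProjS.comp (φ.mulLp.comp hardyS.subtypeL)

/-- The scalar Hankel operator `H_φ = J P^⊥ (φ ·)` on `H²`. -/
def hankelS (φ : SymbolS) : H2S →L[ℂ] H2S :=
  hardyProjS.comp <|
    (Jop ℂ).comp <|
      (ContinuousLinearMap.id ℂ L2S - hardyS.subtypeL.comp hardyProjS).comp <|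
        φ.mulLp.comp hardyS.subtypeL

/-- Pointwise product of scalar symbols. -/
def SymbolS.mul (φ ψ : SymbolS) : SymbolS where
  toFun := fun x => φ.toFun x * ψ.toFun x
  meas := φ.meas.mul ψ.meas
  bound := max φ.bound 0 * max ψ.bound 0
  le_bound := fun x => by
    rw [norm_mul]
    exact mul_le_mul ((φ.le_bound x).trans (le_max_left _ _))
      ((ψ.le_bound x).trans (le_max_left _ _)) (norm_nonneg _) (le_max_right _ _)

/-- The complex-conjugate symbol `φ̄`. -/
def SymbolS.conj (φ : SymbolS) : SymbolS where
  toFun := fun x => conj (φ.toFun x)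
  meas := Complex.continuous_conj.comp_aestronglyMeasurable φ.meas
  bound := φ.bound
  le_bound := fun x => le_trans (le_of_eq (RCLike.norm_conj _)) (φ.le_bound x)

/-- The reflected conjugate symbol `φ̃(z) := conj (φ(z̄))`. -/
def SymbolS.tilde (φ : SymbolS) : SymbolS where
  toFun := fun x => conj (φ.toFun (-x))
  meas := Complex.continuous_conj.comp_aestronglyMeasurable
    (φ.meas.comp_quasiMeasurePreserving
      (Measure.measurePreserving_neg μ𝕋).quasiMeasurePreserving)
  bound := φ.bound
  le_bound := fun x => le_trans (le_of_eq (RCLike.norm_conj _)) (φ.le_bound (-x))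

/-- A scalar symbol is in `H^∞` iff multiplication by it preserves `H²`. -/
def SymbolS.MemHinf (φ : SymbolS) : Prop :=
  ∀ f : L2S, f ∈ hardyS → φ.mulLp f ∈ hardyS

/-- A scalar inner function: an `H^∞` function which is unimodular a.e. on the circle. -/
def SymbolS.IsInner (φ : SymbolS) : Prop :=
  φ.MemHinf ∧ ∀ᵐ x ∂μ𝕋, ‖φ.toFun x‖ = 1

/-- The image `θ · H²` of the Hardy space under a scalar multiplication operator. -/
def SymbolS.rangeH2 (φ : SymbolS) : Submodule ℂ L2S :=
  hardyS.map (φ.mulLp : L2S →ₗ[ℂ] L2S)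

/-- The scalar model space `H(θ) = H² ⊖ θH²`. -/
def modelSpaceS (θ : SymbolS) : Submodule ℂ L2S :=
  hardyS ⊓ (θ.rangeH2)ᗮ

/-- The coordinate function `z` on the circle (i.e. `x ↦ e^{ix}`). -/
def circleCoord : 𝕋 → ℂ := fun x => fourier 1 x

/-- The symbol `z` of the unilateral shift. -/
def shiftSymbolS : SymbolS where
  toFun := circleCoord
  meas := (map_continuous (fourier 1)).aestronglyMeasurable
  bound := 1
  le_bound := fun x => le_of_eq (norm_fourier_apply 1 x)

/-- The symbol `z̄`. -/
def coshiftSymbolS : SymbolS where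
  toFun := fun x => fourier (-1) x
  meas := (map_continuous (fourier (-1))).aestronglyMeasurable
  bound := 1
  le_bound := fun x => le_of_eq (norm_fourier_apply (-1) x)

/-- An operator on a complex Hilbert space is hyponormal if its self-commutator
`[T*, T] = T*T - TT*` is a positive operator. -/
def Hyponormal {H : Type*} [NormedAddCommGroup H] [InnerProductSpace ℂ H] [CompleteSpace H]
    (T : H →L[ℂ] H) : Prop :=
  (ContinuousLinearMap.adjoint T ∘L T - T ∘L ContinuousLinearMap.adjoint T).IsPositive

/-- A Blaschke factor `b_a(z) = (z - a)/(1 - āz)`. -/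
def blaschke (a z : ℂ) : ℂ := (z - a) / (1 - conj a * z)

end BlockToeplitz

namespace BlockToeplitz
open scoped ComplexConjugate

/-- A bounded measurable function lies in `L²` of the circle. -/
theorem SymbolS.memLp2 (φ : SymbolS) : MemLp φ.toFun 2 μ𝕋 :=
  MemLp.mono_exponent (memLp_top_of_bound φ.meas φ.bound
    (Filter.Eventually.of_forall φ.le_bound)) le_top

/-- An `L^∞` function `d` divides `f` in `H²` if `f = d·g` for some `g ∈ H²`. -/
def DividesH2 (d : SymbolS) (f : 𝕋 → ℂ) : Prop :=
  ∃ (g : 𝕋 → ℂ) (hg : MemLp g 2 μ𝕋), hg.toLp g ∈ hardyS ∧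
    ∀ᵐ x ∂μ𝕋, f x = d.toFun x * g x

/-- An inner function `θ` and a function `f ∈ H²` are coprime if their only common inner
divisor is a constant. -/
def CoprimeH2 (θ : SymbolS) (f : 𝕋 → ℂ) : Prop :=
  ∀ d : SymbolS, d.IsInner → DividesH2 d f → DividesH2 d θ.toFun →
    ∃ c : ℂ, ∀ᵐ x ∂μ𝕋, d.toFun x = c

end BlockToeplitz

/-!
Write `φ₊ = θp ā` and `φ₋ = θ̄m b`. Then `φ̄ θp = a + θp · conj φ₋` lies in `H²`, and since
`‖φ̄ f‖ = ‖φ f‖`, hyponormality (`‖T_φ̄ f‖ ≤ ‖T_φ f‖`) forces `φ θp ∈ H²` as well. Subtracting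
`θp φ₊ ∈ H²` leaves `θp φ₋ ∈ H²`, i.e. `b θp = θm Q` with `Q ∈ H²`. Evaluating at a zero `α`
of `θm`: either `α` is a zero of `θp` and the two factors cancel, or `b(α) = 0`, and then the
Blaschke factor `b_α` divides both `b` and `θm`, against coprimality. Induction on the zeros of
`θm` gives `deg θm ≤ deg θp`.

Multiplication by `b_α`, evaluation at `α` and division by `b_α` are handled through the
uniform approximation of `b_w` on the circle by the partial sums of `(z - w) ∑ₙ (w̄ z)ⁿ`.
-/

namespace BlockToeplitz
open scoped ComplexConjugate
open Filter Topology

theorem inner_eq_integral (f g : L2S) : ⟪f, g⟫_ℂ = ∫ x, conj (f x) * g x ∂μ𝕋 := by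
  simp only [MeasureTheory.L2.inner_def, RCLike.inner_apply']

theorem norm_le_of_ae_norm_le {v g : L2S} {c : ℝ} (hc : 0 ≤ c)
    (h : ∀ᵐ x ∂μ𝕋, ‖v x‖ ≤ c * ‖g x‖) : ‖v‖ ≤ c * ‖g‖ := by
  rw [Lp.norm_def, Lp.norm_def, ← ENNReal.toReal_ofReal hc, ← ENNReal.toReal_mul]
  exact ENNReal.toReal_mono (ENNReal.mul_ne_top ENNReal.ofReal_ne_top (Lp.eLpNorm_ne_top g))
    (eLpNorm_le_mul_eLpNorm_of_ae_le_mul h 2)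

theorem norm_eq_of_ae_norm_eq {v w : L2S} (h : ∀ᵐ x ∂μ𝕋, ‖v x‖ = ‖w x‖) : ‖v‖ = ‖w‖ := by
  rw [Lp.norm_def, Lp.norm_def, eLpNorm_congr_norm_ae h]

section FourierCoefficients

def coef (k : ℤ) : L2S →L[ℂ] ℂ := innerSL ℂ (fourierLp 2 k)

theorem coef_apply (k : ℤ) (g : L2S) : coef k g = ⟪fourierLp 2 k, g⟫_ℂ := rfl

theorem norm_coef_le (k : ℤ) (g : L2S) : ‖coef k g‖ ≤ ‖g‖ := by
  simpa [coef_apply, (orthonormal_fourier (T := 2 * π)).1 k] using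
    norm_inner_le_norm (𝕜 := ℂ) (fourierLp 2 k : L2S) g

theorem coef_eq_integral (k : ℤ) (g : L2S) :
    coef k g = ∫ x, conj (fourier k x) * g x ∂μ𝕋 := by
  rw [coef_apply, inner_eq_integral]
  refine integral_congr_ae ?_
  filter_upwards [coeFn_fourierLp 2 k] with x hx
  rw [hx]

theorem coef_fourierLp (j k : ℤ) : coef k (fourierLp 2 j) = if k = j then 1 else 0 :=
  orthonormal_iff_ite.mp (orthonormal_fourier (T := 2 * π)) k j

theorem mem_hardyS_iff {g : L2S} : g ∈ hardyS ↔ ∀ k < 0, coef k g = 0 := by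
  refine ⟨fun hg k hk => (mem_orthogonal _ g).mp hg _ (subset_span ⟨k, hk, rfl⟩),
    fun h => (mem_orthogonal _ g).mpr fun v hv => ?_⟩
  refine span_induction ?_ (inner_zero_left g) (fun x y _ _ hx hy => ?_)
    (fun c x _ hx => ?_) hv
  · rintro _ ⟨k, hk, rfl⟩
    exact h k hk
  · rw [inner_add_left, hx, hy, add_zero]
  · rw [inner_smul_left, hx, mul_zero]

theorem fourierLp_mem_hardyS {k : ℤ} (hk : 0 ≤ k) : (fourierLp 2 k : L2S) ∈ hardyS :=
  mem_hardyS_iff.mpr fun j hj => by rw [coef_fourierLp, if_neg (by omega)]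

theorem coef_eq_zero_of_mem_orthogonal {Z : L2S} (hZ : Z ∈ hardySᗮ) {k : ℤ} (hk : 0 ≤ k) :
    coef k Z = 0 :=
  (mem_orthogonal _ Z).mp hZ _ (fourierLp_mem_hardyS hk)

theorem coef_star (k : ℤ) (g : L2S) : coef k (star g) = conj (coef (-k) g) := by
  rw [coef_eq_integral, coef_eq_integral, ← integral_conj]
  refine integral_congr_ae ?_
  filter_upwards [Lp.coeFn_star g] with x hx
  simp [hx]

theorem star_mem_hardyS {Z : L2S} (hZ : Z ∈ hardySᗮ) : star Z ∈ hardyS :=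
  mem_hardyS_iff.mpr fun k hk => by
    rw [coef_star, coef_eq_zero_of_mem_orthogonal hZ (by omega), map_zero]

end FourierCoefficients

section Multiplication

theorem SymbolS.coeFn_mulLp (ψ : SymbolS) (f : L2S) :
    (ψ.mulLp f : 𝕋 → ℂ) =ᵐ[μ𝕋] fun x => ψ x * f x := by
  simp only [SymbolS.mulLp, pointwiseCLM_apply]
  exact (MemLp.coeFn_toLp _).trans (Eventually.of_forall fun x => by simp)

theorem SymbolS.mulLp_comm (φ ψ : SymbolS) (f : L2S) :
    φ.mulLp (ψ.mulLp f) = ψ.mulLp (φ.mulLp f) := by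
  refine Lp.ext ?_
  filter_upwards [φ.coeFn_mulLp (ψ.mulLp f), ψ.coeFn_mulLp (φ.mulLp f), φ.coeFn_mulLp f,
    ψ.coeFn_mulLp f] with x h1 h2 h3 h4
  rw [h1, h2, h3, h4, mul_left_comm]

theorem SymbolS.mulLp_fourierLp_zero (φ : SymbolS) :
    φ.mulLp (fourierLp 2 0) = φ.memLp2.toLp φ.toFun := by
  refine Lp.ext ?_
  filter_upwards [φ.coeFn_mulLp (fourierLp 2 0), coeFn_fourierLp 2 0, φ.memLp2.coeFn_toLp]
    with x h1 h2 h3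
  rw [h1, h2, h3, fourier_zero, mul_one]

def SymbolS.ofContinuousMap (g : C(𝕋, ℂ)) : SymbolS where
  toFun := g
  meas := g.continuous.aestronglyMeasurable
  bound := ‖g‖
  le_bound := g.norm_coe_le_norm

theorem SymbolS.coeFn_ofContinuousMap_mulLp (g : C(𝕋, ℂ)) (f : L2S) :
    ((SymbolS.ofContinuousMap g).mulLp f : 𝕋 → ℂ) =ᵐ[μ𝕋] fun x => g x * f x :=
  SymbolS.coeFn_mulLp _ f

def mulOp : C(𝕋, ℂ) →ₐ[ℂ] (L2S →L[ℂ] L2S) :=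
  AlgHom.ofLinearMap
    { toFun := fun g => (SymbolS.ofContinuousMap g).mulLp
      map_add' := fun g h => by
        ext1 f
        rw [add_apply]
        refine Lp.ext ?_
        filter_upwards [SymbolS.coeFn_ofContinuousMap_mulLp (g + h) f,
          SymbolS.coeFn_ofContinuousMap_mulLp g f, SymbolS.coeFn_ofContinuousMap_mulLp h f,
          Lp.coeFn_add ((SymbolS.ofContinuousMap g).mulLp f)
            ((SymbolS.ofContinuousMap h).mulLp f)] with x h1 h2 h3 h4
        rw [h4, Pi.add_apply, h1, h2, h3, ContinuousMap.add_apply, add_mul]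
      map_smul' := fun c g => by
        ext1 f
        rw [smul_apply]
        refine Lp.ext ?_
        filter_upwards [SymbolS.coeFn_ofContinuousMap_mulLp (c • g) f,
          SymbolS.coeFn_ofContinuousMap_mulLp g f,
          Lp.coeFn_smul c ((SymbolS.ofContinuousMap g).mulLp f)] with x h1 h2 h3
        simp [h1, h2, h3, mul_assoc] }
    (by
      ext1 f
      refine Lp.ext ?_
      filter_upwards [SymbolS.coeFn_ofContinuousMap_mulLp 1 f] with x hx
      simp [hx])
    (fun g h => by
      ext1 f
      refine Lp.ext ?_
      filter_upwards [SymbolS.coeFn_ofContinuousMap_mulLp (g * h) f,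
        SymbolS.coeFn_ofContinuousMap_mulLp g ((SymbolS.ofContinuousMap h).mulLp f),
        SymbolS.coeFn_ofContinuousMap_mulLp h f] with x h1 h2 h3
      simp [h1, h2, h3, mul_assoc])

theorem mulOp_apply (g : C(𝕋, ℂ)) (f : L2S) :
    mulOp g f = (SymbolS.ofContinuousMap g).mulLp f := by
  simp only [mulOp, AlgHom.ofLinearMap_apply, LinearMap.coe_mk, AddHom.coe_mk]

theorem coeFn_mulOp (g : C(𝕋, ℂ)) (f : L2S) :
    (mulOp g f : 𝕋 → ℂ) =ᵐ[μ𝕋] fun x => g x * f x := by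
  rw [mulOp_apply]
  exact SymbolS.coeFn_ofContinuousMap_mulLp g f

theorem norm_mulOp_apply_le (g : C(𝕋, ℂ)) (f : L2S) : ‖mulOp g f‖ ≤ ‖g‖ * ‖f‖ :=
  norm_le_of_ae_norm_le (norm_nonneg g) <| by
    filter_upwards [coeFn_mulOp g f] with x hx
    rw [hx, norm_mul]
    exact mul_le_mul_of_nonneg_right (g.norm_coe_le_norm x) (norm_nonneg _)

theorem continuous_mulOp_apply (f : L2S) : Continuous fun g : C(𝕋, ℂ) => mulOp g f :=
  AddMonoidHomClass.continuous_of_bound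
    ((ContinuousLinearMap.apply ℂ L2S f).toLinearMap ∘ₗ mulOp.toLinearMap) ‖f‖
    fun g => (norm_mulOp_apply_le g f).trans_eq (mul_comm _ _)

theorem mulOp_const (c : ℂ) (f : L2S) : mulOp (ContinuousMap.const 𝕋 c) f = c • f := by
  refine Lp.ext ?_
  filter_upwards [coeFn_mulOp (ContinuousMap.const 𝕋 c) f, Lp.coeFn_smul c f] with x h1 h2
  rw [h1, h2, ContinuousMap.const_apply, Pi.smul_apply, smul_eq_mul]

theorem coef_mulOp_fourier (n k : ℤ) (f : L2S) :
    coef k (mulOp (fourier n) f) = coef (k - n) f := by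
  rw [coef_eq_integral, coef_eq_integral]
  refine integral_congr_ae ?_
  filter_upwards [coeFn_mulOp (fourier n) f] with x hx
  rw [hx, ← mul_assoc, ← fourier_neg, ← fourier_neg, ← fourier_add, neg_sub, sub_eq_neg_add]

theorem mulOp_fourier_mem_hardyS {n : ℤ} (hn : 0 ≤ n) {f : L2S} (hf : f ∈ hardyS) :
    mulOp (fourier n) f ∈ hardyS :=
  mem_hardyS_iff.mpr fun k hk => by
    rw [coef_mulOp_fourier]
    exact mem_hardyS_iff.mp hf _ (by omega)

end Multiplication

section PointEvaluation

variable {α : ℂ}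

theorem summable_pow_mul_coef (hα : ‖α‖ < 1) (f : L2S) (k : ℕ → ℤ) :
    Summable fun n : ℕ => α ^ n * coef (k n) f :=
  .of_norm_bounded ((summable_geometric_of_lt_one (norm_nonneg α) hα).mul_right ‖f‖) fun n => by
    rw [norm_mul, norm_pow]
    exact mul_le_mul_of_nonneg_left (norm_coef_le _ f) (by positivity)

/-- For `f ∈ H²`, the value at `α` of the holomorphic extension of `f` to the disc. -/
def evalAt (α : ℂ) (hα : ‖α‖ < 1) : L2S →L[ℂ] ℂ :=
  LinearMap.mkContinuous
    { toFun := fun f => ∑' n : ℕ, α ^ n * coef n f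
      map_add' := fun f g => by
        simp only [map_add, mul_add]
        exact (summable_pow_mul_coef hα f _).tsum_add (summable_pow_mul_coef hα g _)
      map_smul' := fun c f => by
        simp only [map_smul, smul_eq_mul, RingHom.id_apply, ← tsum_mul_left, mul_left_comm] }
    (1 - ‖α‖)⁻¹ fun f => by
      refine tsum_of_norm_bounded
        ((hasSum_geometric_of_lt_one (norm_nonneg α) hα).mul_right ‖f‖) fun n => ?_
      rw [norm_mul, norm_pow]
      exact mul_le_mul_of_nonneg_left (norm_coef_le _ f) (by positivity)

theorem evalAt_apply (hα : ‖α‖ < 1) (f : L2S) :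
    evalAt α hα f = ∑' n : ℕ, α ^ n * coef n f := rfl

theorem tsum_pow_mul_coef_sub (hα : ‖α‖ < 1) {f : L2S} (hf : f ∈ hardyS) (m : ℕ) :
    ∑' n : ℕ, α ^ n * coef (n - m) f = α ^ m * evalAt α hα f := by
  have hsupp : (Function.support fun n : ℕ => α ^ n * coef (n - m) f) ⊆
      Set.range fun j : ℕ => j + m := by
    intro n hn
    by_contra hnm
    have hlt : n < m := by
      by_contra h
      exact hnm ⟨n - m, Nat.sub_add_cancel (not_lt.mp h)⟩
    exact hn (by simp only [mem_hardyS_iff.mp hf (n - m : ℤ) (by omega), mul_zero])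
  rw [← (add_left_injective m).tsum_eq hsupp, evalAt_apply, ← tsum_mul_left]
  refine tsum_congr fun j => ?_
  simp only [Nat.cast_add, add_sub_cancel_right, pow_add]
  ring

theorem evalAt_mulOp_fourier (hα : ‖α‖ < 1) {f : L2S} (hf : f ∈ hardyS) (n : ℕ) :
    evalAt α hα (mulOp (fourier n) f) = α ^ n * evalAt α hα f := by
  simp only [evalAt_apply, coef_mulOp_fourier]
  exact tsum_pow_mul_coef_sub hα hf n

end PointEvaluation

section Hyponormal

theorem Hyponormal.norm_adjoint_apply_le {H : Type*} [NormedAddCommGroup H]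
    [InnerProductSpace ℂ H] [CompleteSpace H] {T : H →L[ℂ] H} (hT : Hyponormal T) (x : H) :
    ‖ContinuousLinearMap.adjoint T x‖ ≤ ‖T x‖ := by
  have h := hT.re_inner_nonneg_left x
  rw [sub_apply, inner_sub_left, ContinuousLinearMap.comp_apply,
    ContinuousLinearMap.comp_apply, ContinuousLinearMap.adjoint_inner_left, map_sub,
    inner_self_eq_norm_sq, ← ContinuousLinearMap.adjoint_inner_right,
    inner_self_eq_norm_sq, sub_nonneg] at h
  exact (pow_le_pow_iff_left₀ (norm_nonneg _) (norm_nonneg _) two_ne_zero).mp h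

theorem adjoint_toeplitzS (φ : SymbolS) :
    ContinuousLinearMap.adjoint (toeplitzS φ) = toeplitzS φ.conj := by
  refine ((ContinuousLinearMap.eq_adjoint_iff _ _).mpr fun f g => ?_).symm
  have hmul : ⟪φ.conj.mulLp f, g⟫_ℂ = ⟪(f : L2S), φ.mulLp g⟫_ℂ := by
    rw [inner_eq_integral, inner_eq_integral]
    refine integral_congr_ae ?_
    filter_upwards [φ.conj.coeFn_mulLp f, φ.coeFn_mulLp g] with x h1 h2
    rw [h1, h2]
    simp only [SymbolS.conj, map_mul, Complex.conj_conj]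
    ring
  simpa [toeplitzS, hardyProjS] using hmul

theorem mem_hardyS_of_hyponormal {φ : SymbolS} (hyp : Hyponormal (toeplitzS φ)) {u : L2S}
    (hu : u ∈ hardyS) (hconj : φ.conj.mulLp u ∈ hardyS) : φ.mulLp u ∈ hardyS := by
  have hnorm : ‖φ.conj.mulLp u‖ = ‖φ.mulLp u‖ := by
    refine norm_eq_of_ae_norm_eq ?_
    filter_upwards [φ.conj.coeFn_mulLp u, φ.coeFn_mulLp u] with x h1 h2
    rw [h1, h2, norm_mul, norm_mul]
    simp [SymbolS.conj]
  have hle := hyp.norm_adjoint_apply_le ⟨u, hu⟩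
  rw [adjoint_toeplitzS] at hle
  simp only [toeplitzS, hardyProjS, ContinuousLinearMap.comp_apply, subtypeL_apply,
    ← Submodule.norm_coe, ← starProjection_apply, starProjection_eq_self_iff.mpr hconj,
    hnorm] at hle
  exact (mem_iff_norm_starProjection _ _).mpr
    (le_antisymm (norm_starProjection_apply_le _ _) hle)

end Hyponormal

section BlaschkeFactor

theorem one_sub_conj_mul_ne_zero {w z : ℂ} (hw : ‖w‖ < 1) (hz : ‖z‖ ≤ 1) :
    1 - conj w * z ≠ 0 := by
  rw [sub_ne_zero]
  intro h
  have := congrArg norm h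
  rw [norm_one, norm_mul, RCLike.norm_conj] at this
  nlinarith [norm_nonneg w, norm_nonneg z]

theorem mul_conj_of_norm_eq_one {z : ℂ} (hz : ‖z‖ = 1) : z * conj z = 1 := by
  rw [Complex.mul_conj', hz]
  norm_num

theorem norm_blaschke {w z : ℂ} (hw : ‖w‖ < 1) (hz : ‖z‖ = 1) : ‖blaschke w z‖ = 1 := by
  have hden : ‖1 - conj w * z‖ = ‖z - w‖ := by
    rw [← mul_conj_of_norm_eq_one hz, ← one_mul ‖z - w‖, ← hz, ← RCLike.norm_conj (z - w),
      ← norm_mul, map_sub, mul_sub, mul_comm (conj w)]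
  have hne : ‖z - w‖ ≠ 0 := hden ▸ norm_ne_zero_iff.mpr (one_sub_conj_mul_ne_zero hw hz.le)
  rw [blaschke, norm_div, hden, div_self hne]

theorem blaschke_self (a : ℂ) : blaschke a a = 0 := by
  rw [blaschke, sub_self, zero_div]

theorem conj_blaschke (a z : ℂ) : conj (blaschke a z) = blaschke (conj a) (conj z) := by
  simp [blaschke]

theorem eq_of_blaschke_eq_zero {a z : ℂ} (ha : ‖a‖ < 1) (hz : ‖z‖ ≤ 1)
    (h : blaschke a z = 0) : z = a := by
  rcases div_eq_zero_iff.mp h with h | h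
  · exact sub_eq_zero.mp h
  · exact absurd h (one_sub_conj_mul_ne_zero ha hz)

theorem blaschke_sub_mul_geom_sum {w z : ℂ} (hd : 1 - conj w * z ≠ 0) (N : ℕ) :
    blaschke w z - (z - w) * ∑ n ∈ Finset.range N, (conj w * z) ^ n
      = blaschke w z * (conj w * z) ^ N := by
  set r := conj w * z
  have hb : blaschke w z * (1 - r) = z - w := div_mul_cancel₀ _ hd
  refine mul_right_cancel₀ hd ?_
  linear_combination (1 - r ^ N) * hb + (z - w) * geom_sum_mul r N

theorem fourier_mul_natCast (s : ℤ) (n : ℕ) (x : 𝕋) : fourier (s * n) x = fourier s x ^ n := by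
  induction n with
  | zero => simp
  | succ n ih => rw [Nat.cast_succ, mul_add_one, fourier_add, ih, pow_succ]

/-- `b_w(zˢ)`: `s = 1` gives the Blaschke factor itself, `s = -1` gives `conj ∘ b_{w̄}`. -/
def blaschkeCM (w : ℂ) (hw : ‖w‖ < 1) (s : ℤ) : C(𝕋, ℂ) where
  toFun x := blaschke w (fourier s x)
  continuous_toFun := by
    have hs := (fourier (T := 2 * π) s).continuous
    exact (hs.sub continuous_const).div (continuous_const.sub (continuous_const.mul hs))
      fun x => one_sub_conj_mul_ne_zero hw (norm_fourier_apply s x).le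

theorem blaschkeCM_apply {w : ℂ} (hw : ‖w‖ < 1) (s : ℤ) (x : 𝕋) :
    blaschkeCM w hw s x = blaschke w (fourier s x) := rfl

/-- Partial sums of the expansion `b_w(ζ) = (ζ - w) ∑ₙ (w̄ ζ)ⁿ`, with `ζ = zˢ`. -/
def blaschkeApprox (w : ℂ) (s : ℤ) (N : ℕ) : C(𝕋, ℂ) :=
  ∑ n ∈ Finset.range N, conj w ^ n • (fourier (s * (n + 1)) - w • fourier (s * n))

theorem blaschkeApprox_apply (w : ℂ) (s : ℤ) (N : ℕ) (x : 𝕋) :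
    blaschkeApprox w s N x
      = (fourier s x - w) * ∑ n ∈ Finset.range N, (conj w * fourier s x) ^ n := by
  rw [blaschkeApprox, ContinuousMap.sum_apply, Finset.mul_sum]
  refine Finset.sum_congr rfl fun n _ => ?_
  have h := fourier_mul_natCast s (n + 1) x
  push_cast at h
  simp only [ContinuousMap.smul_apply, ContinuousMap.sub_apply, h, fourier_mul_natCast,
    smul_eq_mul, mul_pow]
  ring

theorem tendsto_blaschkeApprox {w : ℂ} (hw : ‖w‖ < 1) (s : ℤ) :
    Tendsto (blaschkeApprox w s) atTop (𝓝 (blaschkeCM w hw s)) := by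
  refine tendsto_iff_norm_sub_tendsto_zero.mpr (squeeze_zero (fun _ => norm_nonneg _)
    (fun N => ?_) (tendsto_pow_atTop_nhds_zero_of_lt_one (norm_nonneg w) hw))
  refine (ContinuousMap.norm_le _ (by positivity)).mpr fun x => ?_
  have hx := norm_fourier_apply s x
  rw [ContinuousMap.sub_apply, blaschkeApprox_apply, blaschkeCM_apply, ← norm_neg, neg_sub,
    blaschke_sub_mul_geom_sum (one_sub_conj_mul_ne_zero hw hx.le), norm_mul,
    norm_blaschke hw hx, norm_pow, norm_mul, RCLike.norm_conj, hx, one_mul, mul_one]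

theorem isClosed_hardyS : IsClosed (hardyS : Set L2S) := isClosed_orthogonal _

theorem mulOp_blaschkeCM_mem_hardyS {w : ℂ} (hw : ‖w‖ < 1) {f : L2S} (hf : f ∈ hardyS) :
    mulOp (blaschkeCM w hw 1) f ∈ hardyS := by
  refine isClosed_hardyS.mem_of_tendsto
    (((continuous_mulOp_apply f).tendsto _).comp (tendsto_blaschkeApprox hw 1))
    (Eventually.of_forall fun N => ?_)
  simp only [Function.comp_apply, blaschkeApprox, map_sum, map_smul, map_sub,
    FunLike.coe_sum, Finset.sum_apply, FunLike.coe_smul, FunLike.coe_sub, Pi.smul_apply,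
    Pi.sub_apply]
  exact sum_mem fun n _ => smul_mem _ _ (sub_mem (mulOp_fourier_mem_hardyS (by positivity) hf)
    (smul_mem _ _ (mulOp_fourier_mem_hardyS (by positivity) hf)))

theorem evalAt_mulOp_blaschkeCM {α w : ℂ} (hα : ‖α‖ < 1) (hw : ‖w‖ < 1) {f : L2S}
    (hf : f ∈ hardyS) :
    evalAt α hα (mulOp (blaschkeCM w hw 1) f) = blaschke w α * evalAt α hα f := by
  have hlim : Tendsto (fun N => evalAt α hα (mulOp (blaschkeApprox w 1 N) f)) atTop
      (𝓝 (evalAt α hα (mulOp (blaschkeCM w hw 1) f))) :=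
    ((evalAt α hα).continuous.comp (continuous_mulOp_apply f)).tendsto _ |>.comp
      (tendsto_blaschkeApprox hw 1)
  have hpartial : ∀ N, evalAt α hα (mulOp (blaschkeApprox w 1 N) f)
      = ((α - w) * ∑ n ∈ Finset.range N, (conj w * α) ^ n) * evalAt α hα f := by
    intro N
    have hsucc : ∀ n : ℕ, (1 : ℤ) * (n + 1) = ((n + 1 : ℕ) : ℤ) := fun n => by push_cast; ring
    simp only [blaschkeApprox, map_sum, map_smul, map_sub, FunLike.coe_sum, Finset.sum_apply,
      FunLike.coe_smul, FunLike.coe_sub, Pi.smul_apply, Pi.sub_apply, hsucc, one_mul,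
      evalAt_mulOp_fourier hα hf, smul_eq_mul, Finset.mul_sum, Finset.sum_mul]
    refine Finset.sum_congr rfl fun n _ => ?_
    ring
  have hgeom : Tendsto (fun N => ∑ n ∈ Finset.range N, (conj w * α) ^ n) atTop
      (𝓝 (1 - conj w * α)⁻¹) := by
    refine (hasSum_geometric_of_norm_lt_one ?_).tendsto_sum_nat
    rw [norm_mul, RCLike.norm_conj]
    nlinarith [norm_nonneg w, norm_nonneg α]
  refine tendsto_nhds_unique hlim ?_
  simp only [hpartial, blaschke, div_eq_mul_inv]
  exact (hgeom.const_mul _).mul_const _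

theorem tendsto_sum_pow_mul_coef_of_evalAt_eq_zero {α : ℂ} (hα : ‖α‖ < 1) {f : L2S}
    (hf : f ∈ hardyS) (h0 : evalAt α hα f = 0) {k : ℤ} (hk : k ≤ 0) :
    Tendsto (fun N => ∑ n ∈ Finset.range N, α ^ n * coef (k + n) f) atTop (𝓝 0) := by
  have hsum := (summable_pow_mul_coef hα f fun n => k + n).hasSum.tendsto_sum_nat
  have hk' : ∀ n : ℕ, k + n = n - ((-k).toNat : ℕ) := fun n => by omega
  simp only [hk'] at hsum ⊢
  rwa [tsum_pow_mul_coef_sub hα hf, h0, mul_zero] at hsum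

/-- Division by `b_α`, since `conj (b_α z) = b_{ᾱ} (z⁻¹)` on the circle. -/
theorem mulOp_blaschkeCM_conj_mem_hardyS {α : ℂ} (hα : ‖α‖ < 1) {f : L2S} (hf : f ∈ hardyS)
    (h0 : evalAt α hα f = 0) :
    mulOp (blaschkeCM (conj α) (by rwa [RCLike.norm_conj]) (-1)) f ∈ hardyS := by
  refine mem_hardyS_iff.mpr fun k hk => tendsto_nhds_unique
    ((((coef k).continuous.comp (continuous_mulOp_apply f)).tendsto _).comp
      (tendsto_blaschkeApprox _ (-1))) ?_
  have hcoef : ∀ N, coef k (mulOp (blaschkeApprox (conj α) (-1) N) f)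
      = ∑ n ∈ Finset.range N, α ^ n * coef ((k + 1) + n) f
        - conj α * ∑ n ∈ Finset.range N, α ^ n * coef (k + n) f := by
    intro N
    simp only [blaschkeApprox, map_sum, map_smul, map_sub, FunLike.coe_sum, Finset.sum_apply,
      FunLike.coe_smul, FunLike.coe_sub, Pi.smul_apply, Pi.sub_apply, coef_mulOp_fourier,
      smul_eq_mul, Complex.conj_conj, Finset.mul_sum, ← Finset.sum_sub_distrib]
    refine Finset.sum_congr rfl fun n _ => ?_
    rw [show k - -1 * ((n : ℤ) + 1) = k + 1 + n by ring, show k - -1 * (n : ℤ) = k + n by ring]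
    ring
  simp only [Function.comp_def, hcoef]
  simpa using (tendsto_sum_pow_mul_coef_of_evalAt_eq_zero hα hf h0 (by omega : k + 1 ≤ 0)).sub
    ((tendsto_sum_pow_mul_coef_of_evalAt_eq_zero hα hf h0 hk.le).const_mul (conj α))

end BlaschkeFactor

section BlaschkeProduct

def blaschkeProd (L : List ℂ) (z : ℂ) : ℂ := (L.map fun a => blaschke a z).prod

theorem blaschkeProd_nil (z : ℂ) : blaschkeProd [] z = 1 := rfl

theorem blaschkeProd_cons (a : ℂ) (L : List ℂ) (z : ℂ) :
    blaschkeProd (a :: L) z = blaschke a z * blaschkeProd L z := rfl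

theorem mem_of_blaschkeProd_eq_zero {L : List ℂ} (hL : ∀ a ∈ L, ‖a‖ < 1) {z : ℂ}
    (hz : ‖z‖ ≤ 1) (h : blaschkeProd L z = 0) : z ∈ L := by
  obtain ⟨a, ha, hza⟩ := List.mem_map.mp (List.prod_eq_zero_iff.mp h)
  rwa [eq_of_blaschke_eq_zero (hL a ha) hz hza]

theorem blaschkeProd_erase_of_mem {L : List ℂ} {a : ℂ} (ha : a ∈ L) (z : ℂ) :
    blaschkeProd L z = blaschke a z * blaschkeProd (L.erase a) z := by
  rw [← blaschkeProd_cons, blaschkeProd, blaschkeProd, ((List.perm_cons_erase ha).map _).prod_eq]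

def blaschkeProdCM : (L : List ℂ) → (∀ a ∈ L, ‖a‖ < 1) → C(𝕋, ℂ)
  | [], _ => 1
  | a :: L, hL => blaschkeCM a (hL a List.mem_cons_self) 1 *
      blaschkeProdCM L fun b hb => hL b (List.mem_cons_of_mem a hb)

theorem blaschkeProdCM_apply {L : List ℂ} (hL : ∀ a ∈ L, ‖a‖ < 1) (x : 𝕋) :
    blaschkeProdCM L hL x = blaschkeProd L (circleCoord x) := by
  induction L with
  | nil => rfl
  | cons a L ih =>
    rw [blaschkeProdCM, ContinuousMap.mul_apply, ih, blaschkeProd_cons]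
    rfl

theorem mulOp_blaschkeProdCM_mem_hardyS {L : List ℂ} (hL : ∀ a ∈ L, ‖a‖ < 1) {f : L2S}
    (hf : f ∈ hardyS) : mulOp (blaschkeProdCM L hL) f ∈ hardyS := by
  induction L with
  | nil => simpa [blaschkeProdCM] using hf
  | cons a L ih =>
    rw [blaschkeProdCM, map_mul, mul_apply_eq_comp]
    exact mulOp_blaschkeCM_mem_hardyS _ (ih _)

theorem evalAt_mulOp_blaschkeProdCM {α : ℂ} (hα : ‖α‖ < 1) {L : List ℂ}
    (hL : ∀ a ∈ L, ‖a‖ < 1) {f : L2S} (hf : f ∈ hardyS) :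
    evalAt α hα (mulOp (blaschkeProdCM L hL) f) = blaschkeProd L α * evalAt α hα f := by
  induction L with
  | nil => simp [blaschkeProdCM, blaschkeProd_nil]
  | cons a L ih =>
    rw [blaschkeProdCM, map_mul, mul_apply_eq_comp,
      evalAt_mulOp_blaschkeCM hα _ (mulOp_blaschkeProdCM_mem_hardyS _ hf), ih,
      blaschkeProd_cons, mul_assoc]

theorem norm_circleCoord (x : 𝕋) : ‖circleCoord x‖ = 1 := norm_fourier_apply 1 x

theorem circleCoord_pi : circleCoord ((π : ℝ) : 𝕋) = -1 := by
  rw [circleCoord, fourier_coe_apply]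
  convert Complex.exp_pi_mul_I using 2
  push_cast
  field_simp

theorem blaschke_not_ae_eq_const {a : ℂ} (ha : ‖a‖ < 1) (c : ℂ) :
    ¬ ∀ᵐ x ∂μ𝕋, blaschke a (circleCoord x) = c := by
  intro h
  have heq := (Continuous.ae_eq_iff_eq μ𝕋 (blaschkeCM a ha 1).continuous continuous_const).mp h
  have h1 : blaschke a 1 = c := by simpa [blaschkeCM_apply] using congrFun heq 0
  have h2 : blaschke a (-1) = c := by
    rw [← circleCoord_pi]
    exact congrFun heq ((π : ℝ) : 𝕋)
  -- `b_a(1) = b_a(-1)` forces `a ā = 1`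
  have hcross := (div_eq_div_iff (one_sub_conj_mul_ne_zero ha (by simp))
    (one_sub_conj_mul_ne_zero ha (by simp))).mp (h1.trans h2.symm)
  have hnorm : ‖a‖ ^ 2 = 1 := by
    rw [← Complex.ofReal_inj]
    push_cast
    rw [← Complex.mul_conj']
    linear_combination (-(1 : ℂ) / 2) * hcross
  nlinarith [norm_nonneg a]

end BlaschkeProduct

section Divisibility

theorem dividesH2_of_ae_eq (d : SymbolS) {f : 𝕋 → ℂ} {v : L2S} (hv : v ∈ hardyS)
    (h : ∀ᵐ x ∂μ𝕋, f x = d x * v x) : DividesH2 d f :=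
  ⟨v, Lp.memLp v, by rwa [Lp.toLp_coeFn], h⟩

theorem DividesH2.congr {d : SymbolS} {f f' : 𝕋 → ℂ} (h : DividesH2 d f) (hf : f =ᵐ[μ𝕋] f') :
    DividesH2 d f' := by
  obtain ⟨g, hg, hgH, hfg⟩ := h
  refine ⟨g, hg, hgH, ?_⟩
  filter_upwards [hf, hfg] with x h1 h2
  rw [← h1, h2]

theorem DividesH2.mul_left {d : SymbolS} {f : 𝕋 → ℂ} (h : DividesH2 d f) {g : C(𝕋, ℂ)}
    (hg : ∀ u ∈ hardyS, mulOp g u ∈ hardyS) : DividesH2 d fun x => g x * f x := by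
  obtain ⟨q, hq, hqH, hfq⟩ := h
  refine dividesH2_of_ae_eq d (hg _ hqH) ?_
  filter_upwards [hfq, coeFn_mulOp g (hq.toLp q), hq.coeFn_toLp] with x h1 h2 h3
  rw [h1, h2, h3, mul_left_comm]

theorem CoprimeH2.congr_right {θ : SymbolS} {f f' : 𝕋 → ℂ} (h : CoprimeH2 θ f)
    (hf : f =ᵐ[μ𝕋] f') : CoprimeH2 θ f' :=
  fun d hd hdf hdθ => h d hd (hdf.congr hf.symm) hdθ

theorem CoprimeH2.of_forall_dividesH2 {θ θ' : SymbolS} {f : 𝕋 → ℂ} (h : CoprimeH2 θ f)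
    (hθ : ∀ d : SymbolS, DividesH2 d θ'.toFun → DividesH2 d θ.toFun) : CoprimeH2 θ' f :=
  fun d hd hdf hdθ' => h d hd hdf (hθ d hdθ')

theorem CoprimeH2.blaschkeProdCM_of_eq_const_mul {θ : SymbolS} {f : 𝕋 → ℂ} (h : CoprimeH2 θ f)
    {L : List ℂ} (hL : ∀ a ∈ L, ‖a‖ < 1) {c : ℂ}
    (hθ : ∀ x, θ x = c * blaschkeProd L (circleCoord x)) :
    CoprimeH2 (SymbolS.ofContinuousMap (blaschkeProdCM L hL)) f :=
  h.of_forall_dividesH2 fun d hd => by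
    refine (hd.mul_left (g := ContinuousMap.const 𝕋 c) fun u hu => ?_).congr
      (Eventually.of_forall fun x => ?_)
    · rw [mulOp_const]
      exact smul_mem _ c hu
    · show c * blaschkeProdCM L hL x = θ x
      rw [blaschkeProdCM_apply, hθ x]

theorem isInner_blaschkeCM {α : ℂ} (hα : ‖α‖ < 1) :
    (SymbolS.ofContinuousMap (blaschkeCM α hα 1)).IsInner :=
  ⟨fun _ hf => mulOp_blaschkeCM_mem_hardyS hα hf,
    Eventually.of_forall fun x => norm_blaschke hα (norm_fourier_apply 1 x)⟩

/-- `b_α` is then a nonconstant common inner divisor. -/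
theorem not_coprimeH2_of_evalAt_eq_zero {α : ℂ} {L : List ℂ} (hL : ∀ a ∈ α :: L, ‖a‖ < 1)
    {B : L2S} (hB : B ∈ hardyS) (h0 : evalAt α (hL α List.mem_cons_self) B = 0) :
    ¬ CoprimeH2 (SymbolS.ofContinuousMap (blaschkeProdCM (α :: L) hL)) B := by
  intro hcop
  have hα := hL α List.mem_cons_self
  have hdB : DividesH2 (SymbolS.ofContinuousMap (blaschkeCM α hα 1)) B := by
    refine dividesH2_of_ae_eq _ (mulOp_blaschkeCM_conj_mem_hardyS hα hB h0) ?_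
    filter_upwards [coeFn_mulOp _ B] with x hx
    rw [hx, blaschkeCM_apply, fourier_neg, ← conj_blaschke]
    show B x = blaschke α (fourier 1 x) * (conj (blaschke α (fourier 1 x)) * B x)
    rw [← mul_assoc, mul_conj_of_norm_eq_one (norm_blaschke hα (norm_fourier_apply 1 x)),
      one_mul]
  have hdL : DividesH2 (SymbolS.ofContinuousMap (blaschkeCM α hα 1))
      (blaschkeProdCM (α :: L) hL) := by
    refine dividesH2_of_ae_eq _ (mulOp_blaschkeProdCM_mem_hardyS
      (fun a ha => hL a (List.mem_cons_of_mem α ha)) (fourierLp_mem_hardyS le_rfl)) ?_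
    filter_upwards [coeFn_mulOp _ (fourierLp 2 0), coeFn_fourierLp 2 0] with x h1 h2
    rw [h1, h2, fourier_zero, mul_one]
    rfl
  obtain ⟨c, hc⟩ := hcop _ (isInner_blaschkeCM hα) hdB hdL
  exact blaschke_not_ae_eq_const hα c hc

theorem mem_or_evalAt_eq_zero {α : ℂ} {L LP : List ℂ} (hL : ∀ a ∈ α :: L, ‖a‖ < 1)
    (hLP : ∀ a ∈ LP, ‖a‖ < 1) {B Q : L2S} (hB : B ∈ hardyS) (hQ : Q ∈ hardyS)
    (heq : ∀ᵐ x ∂μ𝕋, B x * blaschkeProd LP (circleCoord x)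
      = blaschkeProd (α :: L) (circleCoord x) * Q x) :
    α ∈ LP ∨ evalAt α (hL α List.mem_cons_self) B = 0 := by
  have hα := hL α List.mem_cons_self
  have hop : mulOp (blaschkeProdCM LP hLP) B = mulOp (blaschkeProdCM (α :: L) hL) Q := by
    refine Lp.ext ?_
    filter_upwards [coeFn_mulOp _ B, coeFn_mulOp _ Q, heq] with x h1 h2 h3
    rw [h1, h2, blaschkeProdCM_apply, blaschkeProdCM_apply, mul_comm, h3]
  have h := congrArg (evalAt α hα) hop
  rw [evalAt_mulOp_blaschkeProdCM hα hLP hB, evalAt_mulOp_blaschkeProdCM hα hL hQ,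
    blaschkeProd_cons, blaschke_self, zero_mul, zero_mul] at h
  exact (mul_eq_zero.mp h).imp_left (mem_of_blaschkeProd_eq_zero hLP hα.le)

theorem ae_mul_eq_mul_erase {α : ℂ} (hα : ‖α‖ < 1) {L LP : List ℂ} (hmem : α ∈ LP) {B Q : L2S}
    (heq : ∀ᵐ x ∂μ𝕋, B x * blaschkeProd LP (circleCoord x)
      = blaschkeProd (α :: L) (circleCoord x) * Q x) :
    ∀ᵐ x ∂μ𝕋, B x * blaschkeProd (LP.erase α) (circleCoord x)
      = blaschkeProd L (circleCoord x) * Q x := by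
  filter_upwards [heq] with x hx
  rw [blaschkeProd_erase_of_mem hmem, blaschkeProd_cons] at hx
  have hne : blaschke α (circleCoord x) ≠ 0 := by
    rw [← norm_ne_zero_iff, norm_blaschke hα (norm_circleCoord x)]
    exact one_ne_zero
  exact mul_left_cancel₀ hne (by linear_combination hx)

/-- Every zero of the Blaschke product with zeros `Lm` is cancelled by a zero of the one with
zeros `LP`. -/
theorem length_le_of_ae_mul_eq_mul {Lm LP : List ℂ} (hLm : ∀ a ∈ Lm, ‖a‖ < 1)
    (hLP : ∀ a ∈ LP, ‖a‖ < 1) {B Q : L2S} (hB : B ∈ hardyS) (hQ : Q ∈ hardyS)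
    (heq : ∀ᵐ x ∂μ𝕋, B x * blaschkeProd LP (circleCoord x)
      = blaschkeProd Lm (circleCoord x) * Q x)
    (hcop : CoprimeH2 (SymbolS.ofContinuousMap (blaschkeProdCM Lm hLm)) B) :
    Lm.length ≤ LP.length := by
  induction Lm generalizing LP with
  | nil => simp
  | cons α L ih =>
    have hα := hLm α List.mem_cons_self
    have hL : ∀ a ∈ L, ‖a‖ < 1 := fun a ha => hLm a (List.mem_cons_of_mem α ha)
    rcases mem_or_evalAt_eq_zero hLm hLP hB hQ heq with hmem | h0
    · have hle := ih hL (fun a ha => hLP a (List.mem_of_mem_erase ha))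
        (ae_mul_eq_mul_erase hα hmem heq)
        (hcop.of_forall_dividesH2 fun d hd => hd.mul_left fun _ => mulOp_blaschkeCM_mem_hardyS hα)
      rw [List.length_cons, ← List.length_erase_add_one hmem]
      omega
    · exact absurd hcop (not_coprimeH2_of_evalAt_eq_zero hLm hB h0)

end Divisibility

section Decomposition

variable {φ θ : SymbolS}

/-- With `φ₊ = θ ā`, one has `φ̄ θ = a + θ · conj φ₋` where `conj φ₋ ∈ H²`. -/
theorem conj_mulLp_mem_hardyS (hθ : θ.IsInner) {A : L2S} (hA : A ∈ hardyS)
    (hplus : ((hardyProjS (φ.memLp2.toLp φ.toFun) : L2S) : 𝕋 → ℂ)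
      =ᵐ[μ𝕋] fun x => θ x * conj (A x)) :
    φ.conj.mulLp (θ.mulLp (fourierLp 2 0)) ∈ hardyS := by
  set F := φ.memLp2.toLp φ.toFun
  set P : L2S := (hardyProjS F : L2S)
  have hZ : F - P ∈ hardySᗮ := by
    rw [show P = hardyS.starProjection F from rfl]
    exact sub_starProjection_mem_orthogonal F
  have hdecomp : φ.conj.mulLp (θ.mulLp (fourierLp 2 0)) = A + θ.mulLp (star (F - P)) := by
    refine Lp.ext ?_
    filter_upwards [φ.conj.coeFn_mulLp (θ.mulLp (fourierLp 2 0)),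
      θ.coeFn_mulLp (fourierLp 2 0), coeFn_fourierLp 2 0, Lp.coeFn_add A (θ.mulLp (star (F - P))),
      θ.coeFn_mulLp (star (F - P)), Lp.coeFn_star (F - P), Lp.coeFn_sub F P,
      φ.memLp2.coeFn_toLp, hplus, hθ.2] with x h1 h2 h3 h4 h5 h6 h7 h8 h9 hθx
    rw [h1, h2, h3, h4, Pi.add_apply, h5, h6, Pi.star_apply, h7, Pi.sub_apply, h8, h9,
      fourier_zero]
    have hθθ := mul_conj_of_norm_eq_one hθx
    simp only [SymbolS.conj, star_sub, Complex.star_def, map_mul, Complex.conj_conj]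
    linear_combination A x * hθθ
  rw [hdecomp]
  exact add_mem hA (hθ.1 _ (star_mem_hardyS hZ))

theorem mulLp_sub_hardyProjS_mem_hardyS (hθ : θ.MemHinf)
    (h : φ.mulLp (θ.mulLp (fourierLp 2 0)) ∈ hardyS) :
    θ.mulLp (φ.memLp2.toLp φ.toFun - (hardyProjS (φ.memLp2.toLp φ.toFun) : L2S)) ∈ hardyS := by
  rw [map_sub, ← φ.mulLp_fourierLp_zero, ← SymbolS.mulLp_comm]
  exact sub_mem h (hθ _ (Submodule.coe_mem _))

end Decomposition

theorem statement14_general (φ : SymbolS) (hyp : Hyponormal (toeplitzS φ))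
    (θp θm : SymbolS) (hθp : θp.IsInner) (hθm : θm.IsInner)
    (cp cm : ℂ) (hcp : ‖cp‖ = 1)
    (Lp Lm : List ℂ) (hLp : ∀ a ∈ Lp, ‖a‖ < 1) (hLm : ∀ a ∈ Lm, ‖a‖ < 1)
    (hpf : ∀ x : 𝕋, θp.toFun x = cp * (Lp.map (fun a => blaschke a (circleCoord x))).prod)
    (hmf : ∀ x : 𝕋, θm.toFun x = cm * (Lm.map (fun a => blaschke a (circleCoord x))).prod)
    (a b : 𝕋 → ℂ) (ha : MemLp a 2 μ𝕋) (haH : ha.toLp a ∈ hardyS)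
    (hb : MemLp b 2 μ𝕋) (hbH : hb.toLp b ∈ hardyS)
    (hplus : (((hardyProjS (φ.memLp2.toLp φ.toFun) : L2S)) : 𝕋 → ℂ)
        =ᵐ[μ𝕋] fun x => θp.toFun x * conj (a x))
    (hminus : ((φ.memLp2.toLp φ.toFun - (hardyProjS (φ.memLp2.toLp φ.toFun) : L2S) : L2S)
          : 𝕋 → ℂ)
        =ᵐ[μ𝕋] fun x => conj (θm.toFun x) * b x)
    (hcopm : CoprimeH2 θm b) :
    Lm.length ≤ Lp.length := by
  have hu := hθp.1 _ (fourierLp_mem_hardyS le_rfl)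
  have hconj := conj_mulLp_mem_hardyS hθp haH <| by
    filter_upwards [hplus, ha.coeFn_toLp] with x h1 h2
    rw [h1, h2]
  have hW := mulLp_sub_hardyProjS_mem_hardyS hθp.1 (mem_hardyS_of_hyponormal hyp hu hconj)
  set W := θp.mulLp (φ.memLp2.toLp φ.toFun - (hardyProjS (φ.memLp2.toLp φ.toFun) : L2S))
  have hcp0 : cp ≠ 0 := norm_ne_zero_iff.mp (by rw [hcp]; exact one_ne_zero)
  refine length_le_of_ae_mul_eq_mul hLm hLp hbH (smul_mem _ (cp⁻¹ * cm) hW) ?_ ?_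
  · -- `b θp = θm · (θp φ₋)`, as `φ₋ = θ̄m b` and `|θm| = 1`
    filter_upwards [hb.coeFn_toLp, MeasureTheory.Lp.coeFn_smul (cp⁻¹ * cm) W,
      θp.coeFn_mulLp _, hminus, hθm.2] with x h1 h2 h3 h4 h5
    have hp : θp x = cp * blaschkeProd Lp (circleCoord x) := hpf x
    have hm : θm x = cm * blaschkeProd Lm (circleCoord x) := hmf x
    rw [h1, h2, Pi.smul_apply, h3, h4, smul_eq_mul, hp]
    linear_combination (-(blaschkeProd Lp (circleCoord x) * b x)) * mul_conj_of_norm_eq_one h5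
      + (blaschkeProd Lp (circleCoord x) * b x * conj (θm x)) * hm
      - (cm * blaschkeProd Lm (circleCoord x) * conj (θm x) * blaschkeProd Lp (circleCoord x)
        * b x) * mul_inv_cancel₀ hcp0
  · exact (hcopm.blaschkeProdCM_of_eq_const_mul hLm hmf).congr_right hb.coeFn_toLp.symm

/-- **Statement 14** (cf. Proposition 3.2). If `φ = φ̄₋ + φ₊ ∈ L^∞` is a rational
function (i.e. the inner parts `θ_p, θ_m` of the coprime factorizations `φ₊ = θ_p ā`,
`φ₋ = θ_m b̄` are finite Blaschke products) and the Toeplitz operator `T_φ` is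
hyponormal, then `deg(φ₋) ≤ deg(φ₊)`, where the degree is the degree (number of factors)
of the corresponding finite Blaschke product. In particular, for a trigonometric
polynomial `φ = ∑_{n=-m}^{N} a_n zⁿ` with `T_φ` hyponormal one has `m ≤ N`. -/
theorem statement14 (φ : SymbolS) (hyp : Hyponormal (toeplitzS φ))
    (θp θm : SymbolS) (hθp : θp.IsInner) (hθm : θm.IsInner)
    (cp cm : ℂ) (hcp : ‖cp‖ = 1) (hcm : ‖cm‖ = 1)
    (Lp Lm : List ℂ) (hLp : ∀ a ∈ Lp, ‖a‖ < 1) (hLm : ∀ a ∈ Lm, ‖a‖ < 1)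
    (hpf : ∀ x : 𝕋, θp.toFun x = cp * (Lp.map (fun a => blaschke a (circleCoord x))).prod)
    (hmf : ∀ x : 𝕋, θm.toFun x = cm * (Lm.map (fun a => blaschke a (circleCoord x))).prod)
    (a b : 𝕋 → ℂ) (ha : MemLp a 2 μ𝕋) (haH : ha.toLp a ∈ hardyS)
    (hb : MemLp b 2 μ𝕋) (hbH : hb.toLp b ∈ hardyS)
    (hplus : (((hardyProjS (φ.memLp2.toLp φ.toFun) : L2S)) : 𝕋 → ℂ)
        =ᵐ[μ𝕋] fun x => θp.toFun x * conj (a x))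
    (hminus : ((φ.memLp2.toLp φ.toFun - (hardyProjS (φ.memLp2.toLp φ.toFun) : L2S) : L2S)
          : 𝕋 → ℂ)
        =ᵐ[μ𝕋] fun x => conj (θm.toFun x) * b x)
    (hcopp : CoprimeH2 θp a) (hcopm : CoprimeH2 θm b) :
    Lm.length ≤ Lp.length :=
  statement14_general φ hyp θp θm hθp hθm cp cm hcp Lp Lm hLp hLm hpf hmf a b ha haH hb hbH hplus
    hminus hcopm

end BlockToeplitz
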